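/- There exists an absolute constant C > 0 with the following property. Let f : ℝ → ℝ be five times continuously differentiable on [x − h, x + h] for some x ∈ ℝ and h > 0, and suppose |f^{(k)}(y)| ≤ K for all y ∈ [x − h, x + h] and 0 ≤ k ≤ 5. Then, setting ψ(F,F)(x) = (1/3)·[f(x)·(f(x+h) − f(x−h))/(2h) + (f(x+h)² − f(x−h)²)/(2h)] and ψ(G,F)(x) = (1/3)·[f''(x)·(f(x+h) − f(x−h))/(2h) + (f''(x+h)·f(x+h) − f''(x−h)·f(x−h))/(2h)], one has |f(x)·f'(x) − (ψ(F,F)(x) − (h²/2)·ψ(G,F)(x))| ≤ C·K²·h⁴. (Lemma 3, first expansion: fourth-order compact approximation of the nonlinear term ff'.) -/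

import Mathlib

open Finset

namespace BBMB

/-- A periodic grid function with period `M`. -/
def Periodic (M : ℕ) (u : ℤ → ℝ) : Prop := ∀ i : ℤ, u (i + (M : ℤ)) = u i

/-- Forward difference `δ_x u_{i+1/2} = (u_{i+1} - u_i)/h`. -/
noncomputable def dxp (h : ℝ) (u : ℤ → ℝ) (i : ℤ) : ℝ := (u (i + 1) - u i) / h

/-- Backward difference `δ_x u_{i-1/2} = (u_i - u_{i-1})/h`. -/
noncomputable def dxm (h : ℝ) (u : ℤ → ℝ) (i : ℤ) : ℝ := (u i - u (i - 1)) / h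

/-- Second difference `δ_x² u_i = (u_{i+1} - 2 u_i + u_{i-1})/h²`. -/
noncomputable def dxx (h : ℝ) (u : ℤ → ℝ) (i : ℤ) : ℝ :=
  (u (i + 1) - 2 * u i + u (i - 1)) / h ^ 2

/-- Centered difference `Δ_x u_i = (u_{i+1} - u_{i-1})/(2h)`. -/
noncomputable def Dx (h : ℝ) (u : ℤ → ℝ) (i : ℤ) : ℝ := (u (i + 1) - u (i - 1)) / (2 * h)

/-- Discrete inner product `(u, w) = h ∑_{i=1}^{M} u_i w_i`. -/
noncomputable def ip (M : ℕ) (h : ℝ) (u w : ℤ → ℝ) : ℝ :=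
  h * ∑ i ∈ Finset.Icc (1 : ℤ) (M : ℤ), u i * w i

/-- Discrete inner product `⟨δ_x u, δ_x w⟩ = h ∑_{i=1}^{M} (δ_x u_{i-1/2})(δ_x w_{i-1/2})`. -/
noncomputable def dip (M : ℕ) (h : ℝ) (u w : ℤ → ℝ) : ℝ :=
  h * ∑ i ∈ Finset.Icc (1 : ℤ) (M : ℤ), dxm h u i * dxm h w i

/-- Discrete `L²` norm `‖u‖ = √((u,u))`. -/
noncomputable def nrm (M : ℕ) (h : ℝ) (u : ℤ → ℝ) : ℝ := Real.sqrt (ip M h u u)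

/-- Discrete `H¹` seminorm `|u|₁ = √(⟨δ_x u, δ_x u⟩)`. -/
noncomputable def snorm (M : ℕ) (h : ℝ) (u : ℤ → ℝ) : ℝ := Real.sqrt (dip M h u u)

/-- Trilinear term `ψ(u,v)_i = (1/3) (u_i Δ_x v_i + Δ_x (u·v)_i)`. -/
noncomputable def psi (h : ℝ) (u v : ℤ → ℝ) (i : ℤ) : ℝ :=
  (1 / 3) * (u i * Dx h v i + Dx h (fun j => u j * v j) i)

end BBMB

/-!
Write both discrete forms through the central mean `μu = (u(x+h) + u(x-h))/2` and the centered
difference `δu = (u(x+h) - u(x-h))/(2h)`. Since `(g₊f₊ - g₋f₋)/(2h) = μg·δf + δg·μf` and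
`(f₊² - f₋²)/(2h) = 2·μf·δf`, the error `f f' - ψ(F,F) + (h²/2)·ψ(G,F)` equals, identically, a
combination of the Taylor defects `δf - (f' + h²f'''/6)`, `μf - (f + h²f''/2)`, `μf'' - f''`,
`δf'' - f'''` and `μf - f`, each multiplied by bounded factors and by a power of `h` that makes the
term `O(K²h⁴)`. The defects are bounded by Taylor expansions of `f` and `f''` about `x` in both
directions.
-/

open Set
open scoped Nat

section

variable {𝕜 F : Type*} [NontriviallyNormedField 𝕜] [NormedAddCommGroup F] [NormedSpace 𝕜 F]
  {f : 𝕜 → F} {s : Set 𝕜}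

theorem iteratedDerivWithin_iteratedDerivWithin (k m : ℕ) :
    iteratedDerivWithin k (iteratedDerivWithin m f s) s = iteratedDerivWithin (k + m) f s := by
  ext x
  have hm : iteratedDerivWithin m f s = (fun g : 𝕜 → F => derivWithin g s)^[m] f :=
    funext fun _ => iteratedDerivWithin_eq_iterate
  rw [iteratedDerivWithin_eq_iterate, iteratedDerivWithin_eq_iterate, hm,
    Function.iterate_add_apply]

theorem ContDiffOn.iteratedDerivWithin_right {n m : ℕ} (hf : ContDiffOn 𝕜 (n + m) f s)
    (hs : UniqueDiffOn 𝕜 s) : ContDiffOn 𝕜 n (iteratedDerivWithin m f s) s := by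
  rw [contDiffOn_nat_iff_continuousOn_differentiableOn_deriv hs]
  simp only [iteratedDerivWithin_iteratedDerivWithin]
  exact ⟨fun j hj => hf.continuousOn_iteratedDerivWithin (by norm_cast; omega) hs,
    fun j hj => hf.differentiableOn_iteratedDerivWithin (by norm_cast; omega) hs⟩

end

-- Unlike `taylor_mean_remainder_bound`, the base point may lie anywhere in `s`, on either side
-- of `z`.
theorem norm_sub_taylorWithinEval_le {E : Type*} [NormedAddCommGroup E] [NormedSpace ℝ E]
    {f : ℝ → E} {s : Set ℝ} {x₀ z M : ℝ} {n : ℕ} (hs : Convex ℝ s) (hs' : UniqueDiffOn ℝ s)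
    (hf : ContDiffOn ℝ (n + 1) f s) (hx₀ : x₀ ∈ s) (hz : z ∈ s)
    (hM : ∀ y ∈ s, ‖iteratedDerivWithin (n + 1) f s y‖ ≤ M) :
    ‖f z - taylorWithinEval f n s x₀ z‖ ≤ M * |z - x₀| ^ (n + 1) / n ! := by
  have hseg : uIcc x₀ z ⊆ s := hs.ordConnected.uIcc_subset hx₀ hz
  have hderiv : ∀ t ∈ uIcc x₀ z, HasDerivWithinAt (fun y => taylorWithinEval f n s y z)
      (((n ! : ℝ)⁻¹ * (z - t) ^ n) • iteratedDerivWithin (n + 1) f s t) (uIcc x₀ z) t :=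
    fun t ht => (hasDerivWithinAt_taylorWithinEval hs' self_mem_nhdsWithin (hseg ht) subset_rfl
      hf.of_succ (hf.differentiableOn_iteratedDerivWithin (by norm_cast; omega) hs' t
        (hseg ht))).mono hseg
  have hbound : ∀ t ∈ uIcc x₀ z,
      ‖((n ! : ℝ)⁻¹ * (z - t) ^ n) • iteratedDerivWithin (n + 1) f s t‖ ≤
        (n ! : ℝ)⁻¹ * |z - x₀| ^ n * M := by
    intro t ht
    rw [norm_smul, Real.norm_eq_abs, abs_mul, abs_pow, abs_inv, Nat.abs_cast]
    gcongr _ * ?_ ^ n * ?_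
    · exact abs_sub_right_of_mem_uIcc ht
    · exact hM t (hseg ht)
  have := (convex_uIcc x₀ z).norm_image_sub_le_of_norm_hasDerivWithin_le hderiv hbound
    left_mem_uIcc right_mem_uIcc
  rw [taylorWithinEval_self, Real.norm_eq_abs] at this
  refine this.trans_eq ?_
  ring

theorem abs_sub_taylor_sum_le {f : ℝ → ℝ} {s : Set ℝ} {x z M : ℝ} {n : ℕ} (hs : Convex ℝ s)
    (hs' : UniqueDiffOn ℝ s) (hf : ContDiffOn ℝ (n + 1) f s) (hx : x ∈ s) (hz : z ∈ s)
    (hM : ∀ y ∈ s, |iteratedDerivWithin (n + 1) f s y| ≤ M) :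
    |f z - (∑ k ∈ Finset.range (n + 1), iteratedDerivWithin k f s x * (z - x) ^ k / (k ! : ℝ))| ≤
      M * |z - x| ^ (n + 1) / n ! := by
  have := norm_sub_taylorWithinEval_le hs hs' hf hx hz hM
  rw [taylor_within_apply, Real.norm_eq_abs] at this
  convert this using 3
  refine Finset.sum_congr rfl fun k _ => ?_
  rw [smul_eq_mul]
  ring

namespace BBMB

noncomputable def centralMean (f : ℝ → ℝ) (x h : ℝ) : ℝ := (f (x + h) + f (x - h)) / 2

noncomputable def centralDiff (f : ℝ → ℝ) (x h : ℝ) : ℝ := (f (x + h) - f (x - h)) / (2 * h)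

variable {f : ℝ → ℝ} {s : Set ℝ} {x h M : ℝ}

theorem abs_centralMean_le (hp : |f (x + h)| ≤ M) (hm : |f (x - h)| ≤ M) :
    |centralMean f x h| ≤ M := by
  rw [centralMean, abs_div, abs_two, div_le_iff₀ two_pos]
  exact (abs_add_le _ _).trans (by linarith)

theorem abs_centralMean_sub_taylor_le (hs : Convex ℝ s) (hs' : UniqueDiffOn ℝ s) (hx : x ∈ s)
    (hxp : x + h ∈ s) (hxm : x - h ∈ s) (hf : ContDiffOn ℝ 4 f s)
    (hM : ∀ y ∈ s, |iteratedDerivWithin 4 f s y| ≤ M) :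
    |centralMean f x h - (f x + iteratedDerivWithin 2 f s x * h ^ 2 / 2)| ≤ M * h ^ 4 / 6 := by
  have hp := abs_sub_taylor_sum_le (n := 3) hs hs' hf hx hxp hM
  have hm := abs_sub_taylor_sum_le (n := 3) hs hs' hf hx hxm hM
  simp only [Finset.sum_range_succ, Finset.sum_range_zero, add_sub_cancel_left,
    sub_sub_cancel_left, abs_neg, (by decide : Even 4).pow_abs] at hp hm
  norm_num [Nat.factorial] at hp hm
  rw [abs_le] at *
  unfold centralMean
  constructor <;> linarith

theorem abs_centralMean_sub_le_sq (hs : Convex ℝ s) (hs' : UniqueDiffOn ℝ s) (hx : x ∈ s)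
    (hxp : x + h ∈ s) (hxm : x - h ∈ s) (hf : ContDiffOn ℝ 2 f s)
    (hM : ∀ y ∈ s, |iteratedDerivWithin 2 f s y| ≤ M) :
    |centralMean f x h - f x| ≤ M * h ^ 2 := by
  have hp := abs_sub_taylor_sum_le (n := 1) hs hs' hf hx hxp hM
  have hm := abs_sub_taylor_sum_le (n := 1) hs hs' hf hx hxm hM
  simp only [Finset.sum_range_succ, Finset.sum_range_zero, add_sub_cancel_left,
    sub_sub_cancel_left, abs_neg] at hp hm
  norm_num at hp hm
  rw [abs_le] at *
  unfold centralMean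
  constructor <;> linarith

theorem abs_centralDiff_sub_le_iff (hh : 0 < h) (T B : ℝ) :
    |centralDiff f x h - T| ≤ B ↔ |f (x + h) - f (x - h) - 2 * h * T| ≤ 2 * h * B := by
  have h2 : 0 < 2 * h := by linarith
  rw [centralDiff, div_sub' h2.ne', abs_div, abs_of_pos h2, div_le_iff₀ h2, mul_comm B]

theorem abs_centralDiff_le (hs : Convex ℝ s) (hs' : UniqueDiffOn ℝ s) (hx : x ∈ s)
    (hxp : x + h ∈ s) (hxm : x - h ∈ s) (hh : 0 < h) (hf : ContDiffOn ℝ 1 f s)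
    (hM : ∀ y ∈ s, |iteratedDerivWithin 1 f s y| ≤ M) :
    |centralDiff f x h| ≤ M := by
  have hp := abs_sub_taylor_sum_le (n := 0) hs hs' hf hx hxp hM
  have hm := abs_sub_taylor_sum_le (n := 0) hs hs' hf hx hxm hM
  simp only [Finset.sum_range_succ, Finset.sum_range_zero, add_sub_cancel_left,
    sub_sub_cancel_left, abs_neg, abs_of_pos hh] at hp hm
  norm_num at hp hm
  simpa using (abs_centralDiff_sub_le_iff hh 0 M).2 (by rw [abs_le] at *; constructor <;> linarith)

theorem abs_centralDiff_sub_le_sq (hs : Convex ℝ s) (hs' : UniqueDiffOn ℝ s) (hx : x ∈ s)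
    (hxp : x + h ∈ s) (hxm : x - h ∈ s) (hh : 0 < h) (hf : ContDiffOn ℝ 3 f s)
    (hM : ∀ y ∈ s, |iteratedDerivWithin 3 f s y| ≤ M) :
    |centralDiff f x h - iteratedDerivWithin 1 f s x| ≤ M * h ^ 2 / 2 := by
  have hp := abs_sub_taylor_sum_le (n := 2) hs hs' hf hx hxp hM
  have hm := abs_sub_taylor_sum_le (n := 2) hs hs' hf hx hxm hM
  simp only [Finset.sum_range_succ, Finset.sum_range_zero, add_sub_cancel_left,
    sub_sub_cancel_left, abs_neg, abs_of_pos hh] at hp hm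
  norm_num [Nat.factorial, -iteratedDerivWithin_one] at hp hm
  rw [abs_centralDiff_sub_le_iff hh, abs_le] at *
  constructor <;> linarith

theorem abs_centralDiff_sub_taylor_le (hs : Convex ℝ s) (hs' : UniqueDiffOn ℝ s) (hx : x ∈ s)
    (hxp : x + h ∈ s) (hxm : x - h ∈ s) (hh : 0 < h) (hf : ContDiffOn ℝ 5 f s)
    (hM : ∀ y ∈ s, |iteratedDerivWithin 5 f s y| ≤ M) :
    |centralDiff f x h - (iteratedDerivWithin 1 f s x + iteratedDerivWithin 3 f s x * h ^ 2 / 6)|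
      ≤ M * h ^ 4 / 24 := by
  have hp := abs_sub_taylor_sum_le (n := 4) hs hs' hf hx hxp hM
  have hm := abs_sub_taylor_sum_le (n := 4) hs hs' hf hx hxm hM
  simp only [Finset.sum_range_succ, Finset.sum_range_zero, add_sub_cancel_left,
    sub_sub_cancel_left, abs_neg, abs_of_pos hh] at hp hm
  norm_num [Nat.factorial, -iteratedDerivWithin_one] at hp hm
  rw [abs_centralDiff_sub_le_iff hh, abs_le] at *
  constructor <;> linarith

theorem compact_error_eq (f g : ℝ → ℝ) (x h a₁ a₃ : ℝ) (hh : h ≠ 0) :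
    f x * a₁ -
        ((1 / 3) * (f x * ((f (x + h) - f (x - h)) / (2 * h)) +
            (f (x + h) ^ 2 - f (x - h) ^ 2) / (2 * h)) -
          h ^ 2 / 2 * ((1 / 3) * (g x * ((f (x + h) - f (x - h)) / (2 * h)) +
            (g (x + h) * f (x + h) - g (x - h) * f (x - h)) / (2 * h)))) =
      -(f x * (centralDiff f x h - (a₁ + a₃ * h ^ 2 / 6))) -
        2 / 3 * ((centralMean f x h - (f x + g x * h ^ 2 / 2)) * centralDiff f x h) +
        h ^ 2 / 6 * ((centralMean g x h - g x) * centralDiff f x h +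
          (centralDiff g x h - a₃) * centralMean f x h + a₃ * (centralMean f x h - f x)) := by
  unfold centralMean centralDiff
  field_simp
  ring

theorem abs_compact_error_le {K h a₀ a₃ P S e₁ e₂ e₃ e₄ e₅ : ℝ} (ha₀ : |a₀| ≤ K) (ha₃ : |a₃| ≤ K)
    (hP : |P| ≤ K) (hS : |S| ≤ K) (he₁ : |e₁| ≤ K * h ^ 4 / 24) (he₂ : |e₂| ≤ K * h ^ 4 / 6)
    (he₃ : |e₃| ≤ K * h ^ 2) (he₄ : |e₄| ≤ K * h ^ 2 / 2) (he₅ : |e₅| ≤ K * h ^ 2) :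
    |-(a₀ * e₁) - 2 / 3 * (e₂ * P) + h ^ 2 / 6 * (e₃ * P + e₄ * S + a₃ * e₅)| ≤ K ^ 2 * h ^ 4 := by
  have hK : 0 ≤ K := (abs_nonneg _).trans ha₀
  calc _ ≤ |a₀| * |e₁| + 2 / 3 * (|e₂| * |P|) +
          h ^ 2 / 6 * (|e₃| * |P| + |e₄| * |S| + |a₃| * |e₅|) := by
        refine (abs_add_le _ _).trans (add_le_add ((abs_sub _ _).trans_eq ?_) ?_)
        · rw [abs_neg, abs_mul, abs_mul (2 / 3), abs_mul, abs_of_pos (by norm_num : (0:ℝ) < 2 / 3)]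
        · rw [abs_mul, abs_of_nonneg (by positivity : (0:ℝ) ≤ h ^ 2 / 6), ← abs_mul, ← abs_mul,
            ← abs_mul]
          gcongr
          exact abs_add_three _ _ _
    _ ≤ K * (K * h ^ 4 / 24) + 2 / 3 * (K * h ^ 4 / 6 * K) +
          h ^ 2 / 6 * (K * h ^ 2 * K + K * h ^ 2 / 2 * K + K * (K * h ^ 2)) := by
        gcongr
    _ ≤ K ^ 2 * h ^ 4 := by
        have : 0 ≤ K ^ 2 * h ^ 4 := by positivity
        linarith

/-- Lemma 3, first expansion: fourth-order compact approximation of `f f'`. -/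
theorem compact_nonlinear :
    ∃ C : ℝ, 0 < C ∧
      ∀ (f : ℝ → ℝ) (x h K : ℝ), 0 < h →
        ContDiffOn ℝ 5 f (Set.Icc (x - h) (x + h)) →
        (∀ y ∈ Set.Icc (x - h) (x + h), ∀ k : ℕ, k ≤ 5 →
          |iteratedDerivWithin k f (Set.Icc (x - h) (x + h)) y| ≤ K) →
        |f x * iteratedDerivWithin 1 f (Set.Icc (x - h) (x + h)) x -
            ((1 / 3) * (f x * ((f (x + h) - f (x - h)) / (2 * h)) +
                (f (x + h) ^ 2 - f (x - h) ^ 2) / (2 * h)) -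
              h ^ 2 / 2 *
                ((1 / 3) * (iteratedDerivWithin 2 f (Set.Icc (x - h) (x + h)) x *
                      ((f (x + h) - f (x - h)) / (2 * h)) +
                    (iteratedDerivWithin 2 f (Set.Icc (x - h) (x + h)) (x + h) * f (x + h) -
                        iteratedDerivWithin 2 f (Set.Icc (x - h) (x + h)) (x - h) * f (x - h)) /
                      (2 * h))))| ≤ C * K ^ 2 * h ^ 4 := by
  refine ⟨1, one_pos, fun f x h K hh hf hK => ?_⟩
  set s := Icc (x - h) (x + h)
  have hs : Convex ℝ s := convex_Icc _ _
  have hs' : UniqueDiffOn ℝ s := uniqueDiffOn_Icc (by linarith)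
  have hx : x ∈ s := ⟨by linarith, by linarith⟩
  have hxp : x + h ∈ s := ⟨by linarith, le_rfl⟩
  have hxm : x - h ∈ s := ⟨le_rfl, by linarith⟩
  have hK₀ : ∀ y ∈ s, |f y| ≤ K := fun y hy => by simpa using hK y hy 0 (by norm_num)
  set g := iteratedDerivWithin 2 f s
  have hg : ContDiffOn ℝ 3 g s := (hf : ContDiffOn ℝ (3 + 2 : ℕ) f s).iteratedDerivWithin_right hs'
  have hgK : ∀ k ≤ 3, ∀ y ∈ s, |iteratedDerivWithin k g s y| ≤ K := fun k hk y hy => by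
    rw [iteratedDerivWithin_iteratedDerivWithin]
    exact hK y hy _ (by omega)
  have hP := abs_centralDiff_le hs hs' hx hxp hxm hh (hf.of_le (by norm_num))
    (hK · · 1 (by norm_num))
  have hS := abs_centralMean_le (hK₀ _ hxp) (hK₀ _ hxm)
  have he₁ := abs_centralDiff_sub_taylor_le hs hs' hx hxp hxm hh hf (hK · · 5 le_rfl)
  have he₂ := abs_centralMean_sub_taylor_le hs hs' hx hxp hxm (hf.of_le (by norm_num))
    (hK · · 4 (by norm_num))
  have he₃ := abs_centralMean_sub_le_sq hs hs' hx hxp hxm (hg.of_le (by norm_num))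
    (hgK 2 (by norm_num))
  have he₄ := abs_centralDiff_sub_le_sq hs hs' hx hxp hxm hh hg (hgK 3 le_rfl)
  rw [iteratedDerivWithin_iteratedDerivWithin] at he₄
  have he₅ := abs_centralMean_sub_le_sq hs hs' hx hxp hxm (hf.of_le (by norm_num))
    (hK · · 2 (by norm_num))
  rw [compact_error_eq f g x h _ (iteratedDerivWithin 3 f s x) hh.ne', one_mul]
  exact abs_compact_error_le (hK₀ x hx) (hK x hx 3 (by norm_num)) hP hS he₁ he₂ he₃ he₄ he₅

end BBMB
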